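/- arXiv:2301.02863 — 8 statements merged into one kernel-verified Lean document; each statement's English description precedes it below -/
import Mathlib

section
/- Let f : ℝ^n → ℝ be differentiable with gradient ∇f Lipschitz continuous with constant L > 0 on ℝ^n. Let x, d ∈ ℝ^n, α > 0, and σ ∈ (0,1). If ∇f(x)ᵀd < 0 and the curvature condition ∇f(x + α d)ᵀd ≥ σ ∇f(x)ᵀd holds, then α ≥ ((1 − σ)/L) · (−∇f(x)ᵀd)/‖d‖². -/
open scoped RealInnerProductSpace

theorem inner_sub_le_mul_norm_sq {E : Type*} [NormedAddCommGroup E] [InnerProductSpace ℝ E]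
    {g : E → E} {L α : ℝ} {x d : E} (hα : 0 ≤ α)
    (hg : ‖g (x + α • d) - g x‖ ≤ L * ‖x + α • d - x‖) :
    ⟪g (x + α • d) - g x, d⟫ ≤ L * α * ‖d‖ ^ 2 :=
  calc ⟪g (x + α • d) - g x, d⟫
      ≤ ‖g (x + α • d) - g x‖ * ‖d‖ := real_inner_le_norm _ _
    _ ≤ L * ‖x + α • d - x‖ * ‖d‖ := by gcongr
    _ = L * α * ‖d‖ ^ 2 := by
      rw [add_sub_cancel_left, norm_smul, Real.norm_of_nonneg hα]
      ring

theorem stmt1_general {n : ℕ} (f : EuclideanSpace ℝ (Fin n) → ℝ)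
    (L : ℝ) (hL : 0 < L)
    (hLip : ∀ a b, ‖gradient f a - gradient f b‖ ≤ L * ‖a - b‖)
    (x d : EuclideanSpace ℝ (Fin n)) (α σ : ℝ) (hα : 0 < α)
    (hcurv : ⟪gradient f (x + α • d), d⟫ ≥ σ * ⟪gradient f x, d⟫) :
    α ≥ ((1 - σ) / L) * (-⟪gradient f x, d⟫) / ‖d‖ ^ 2 := by
  have hgrowth := inner_sub_le_mul_norm_sq hα.le (hLip (x + α • d) x)
  rw [inner_sub_left] at hgrowth
  -- `div_le_of_le_mul₀` also covers `d = 0`, where the right-hand side is `_ / 0 = 0`.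
  refine div_le_of_le_mul₀ (by positivity) hα.le ?_
  rw [div_mul_eq_mul_div, div_le_iff₀ hL]
  linarith

/-- Step size lower bound (Lemma 5): any step size accepted by the Wolfe-type curvature
condition along a descent direction is bounded below. -/
theorem stmt1 {n : ℕ} (f : EuclideanSpace ℝ (Fin n) → ℝ)
    (hf : Differentiable ℝ f) (L : ℝ) (hL : 0 < L)
    (hLip : ∀ a b, ‖gradient f a - gradient f b‖ ≤ L * ‖a - b‖)
    (x d : EuclideanSpace ℝ (Fin n)) (α σ : ℝ) (hα : 0 < α)
    (hσ : σ ∈ Set.Ioo (0 : ℝ) 1)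
    (hdesc : ⟪gradient f x, d⟫ < 0)
    (hcurv : ⟪gradient f (x + α • d), d⟫ ≥ σ * ⟪gradient f x, d⟫) :
    α ≥ ((1 - σ) / L) * (-⟪gradient f x, d⟫) / ‖d‖ ^ 2 :=
  stmt1_general f L hL hLip x d α σ hα hcurv
end

section
/- Let C, f⁺, t ∈ ℝ with t < 0, let η ∈ [0,1] and Q > 0, and set Q⁺ = ηQ + 1 and C⁺ = (ηQ·C + f⁺)/Q⁺. If f⁺ ≤ C + Q⁺·t, then f⁺ < C, C⁺ ≤ C + t < C, and f⁺ ≤ C⁺. -/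
/-! With `w = ηQ ≥ 0`, the new reference value `C⁺ = (w C + f⁺)/(w + 1)` is a convex combination
of `C` and `f⁺`. Since `w + 1 ≥ 1` and `t < 0`, the acceptance test `f⁺ ≤ C + (w + 1) t` forces
`f⁺ ≤ C + t < C`; averaging it with `C` gives `C⁺ ≤ C + t`, and a convex combination of `C` and
the smaller value `f⁺` is at least `f⁺`. -/

section NonmonotoneLineSearch

variable {w C f t : ℝ}

lemma le_add_of_le_add_succ_mul (hw : 0 ≤ w) (ht : t ≤ 0) (h : f ≤ C + (w + 1) * t) :
    f ≤ C + t := by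
  nlinarith [mul_nonpos_of_nonneg_of_nonpos hw ht]

lemma div_succ_le_add_of_le_add_succ_mul (hw : 0 ≤ w) (h : f ≤ C + (w + 1) * t) :
    (w * C + f) / (w + 1) ≤ C + t := by
  rw [div_le_iff₀ (by positivity)]
  linear_combination h

lemma le_div_succ_of_le (hw : 0 ≤ w) (hf : f ≤ C) : f ≤ (w * C + f) / (w + 1) := by
  rw [le_div_iff₀ (by positivity)]
  linear_combination mul_le_mul_of_nonneg_left hf hw

end NonmonotoneLineSearch

/-- Inductive step of Lemma 6 for the generalized nonmonotone line search. -/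
theorem stmt2 (C fplus t η Q Qplus Cplus : ℝ) (ht : t < 0)
    (hη : η ∈ Set.Icc (0 : ℝ) 1) (hQ : 0 < Q)
    (hQplus : Qplus = η * Q + 1)
    (hCplus : Cplus = (η * Q * C + fplus) / Qplus)
    (h : fplus ≤ C + Qplus * t) :
    fplus < C ∧ Cplus ≤ C + t ∧ C + t < C ∧ fplus ≤ Cplus := by
  subst hQplus hCplus
  have hw : 0 ≤ η * Q := mul_nonneg hη.1 hQ.le
  have hCt : C + t < C := by linarith
  have hf : fplus ≤ C + t := le_add_of_le_add_succ_mul hw ht.le h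
  exact ⟨hf.trans_lt hCt, div_succ_le_add_of_le_add_succ_mul hw h, hCt,
    le_div_succ_of_le hw (hf.trans hCt.le)⟩
end

section
/- Let s, y ∈ ℝ^m with s ≠ 0, let υ > 0, c > 0, μ_max > 0, and 0 < μ ≤ μ_max. Assume sᵀy ≥ υ‖s‖² and ‖y‖ ≤ c‖s‖. Define the regularized difference vector y(μ) = y + μ s. Then ‖y(μ)‖²/(sᵀy(μ)) ≤ c²/υ + 2 μ_max. -/
open scoped RealInnerProductSpace

/-! Expanding, `‖y + μ s‖² = ‖y‖² + 2μ sᵀy + μ²‖s‖²` and `sᵀy(μ) = sᵀy + μ‖s‖²`. The Lipschitz and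
curvature bounds give `‖y‖² ≤ c²‖s‖² ≤ (c²/υ) sᵀy`, and `μ²‖s‖² ≤ 2μ · μ‖s‖²`, so the numerator is at
most `(c²/υ + 2μ) sᵀy(μ)`; finally `μ ≤ μ_max`. -/

section RegularizedPair

variable {E : Type*} [NormedAddCommGroup E] [InnerProductSpace ℝ E] (s y : E) (μ : ℝ)

theorem inner_add_smul_self_right : ⟪s, y + μ • s⟫ = ⟪s, y⟫ + μ * ‖s‖ ^ 2 := by
  rw [inner_add_right, real_inner_smul_right, real_inner_self_eq_norm_sq]

theorem norm_add_smul_sq :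
    ‖y + μ • s‖ ^ 2 = ‖y‖ ^ 2 + 2 * μ * ⟪s, y⟫ + μ ^ 2 * ‖s‖ ^ 2 := by
  rw [norm_add_sq_real, real_inner_smul_right, norm_smul, real_inner_comm, mul_pow,
    Real.norm_eq_abs, sq_abs]
  ring

variable {s y μ} {υ c : ℝ}

theorem inner_add_smul_self_right_nonneg (hυ : 0 ≤ υ) (hμ : 0 ≤ μ)
    (hcurv : υ * ‖s‖ ^ 2 ≤ ⟪s, y⟫) : 0 ≤ ⟪s, y + μ • s⟫ := by
  rw [inner_add_smul_self_right]
  have := mul_nonneg hυ (sq_nonneg ‖s‖)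
  have := mul_nonneg hμ (sq_nonneg ‖s‖)
  linarith

theorem norm_sq_le_of_curvature (hυ : 0 < υ) (hcurv : υ * ‖s‖ ^ 2 ≤ ⟪s, y⟫)
    (hLip : ‖y‖ ≤ c * ‖s‖) : ‖y‖ ^ 2 ≤ c ^ 2 / υ * ⟪s, y⟫ :=
  calc ‖y‖ ^ 2 ≤ (c * ‖s‖) ^ 2 := pow_le_pow_left₀ (norm_nonneg y) hLip 2
    _ = c ^ 2 / υ * (υ * ‖s‖ ^ 2) := by field_simp
    _ ≤ c ^ 2 / υ * ⟪s, y⟫ := by gcongr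

theorem norm_add_smul_sq_le_mul_inner (hυ : 0 < υ) (hμ : 0 ≤ μ)
    (hcurv : υ * ‖s‖ ^ 2 ≤ ⟪s, y⟫) (hLip : ‖y‖ ≤ c * ‖s‖) :
    ‖y + μ • s‖ ^ 2 ≤ (c ^ 2 / υ + 2 * μ) * ⟪s, y + μ • s⟫ := by
  have hy := norm_sq_le_of_curvature hυ hcurv hLip
  have hcross : 0 ≤ c ^ 2 / υ * (μ * ‖s‖ ^ 2) := by positivity
  have hquad : 0 ≤ μ ^ 2 * ‖s‖ ^ 2 := by positivity
  rw [norm_add_smul_sq, inner_add_smul_self_right]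
  linarith

end RegularizedPair

theorem stmt5_general {m : ℕ} (s y : EuclideanSpace ℝ (Fin m))
    (υ c μmax μ : ℝ) (hυ : 0 < υ)
    (hμ : 0 < μ) (hμ' : μ ≤ μmax)
    (hcurv : ⟪s, y⟫ ≥ υ * ‖s‖ ^ 2) (hLip : ‖y‖ ≤ c * ‖s‖) :
    ‖y + μ • s‖ ^ 2 / ⟪s, y + μ • s⟫ ≤ c ^ 2 / υ + 2 * μmax := by
  have hden := inner_add_smul_self_right_nonneg hυ.le hμ.le hcurv
  have hK : 0 ≤ c ^ 2 / υ + 2 * μmax := by positivity [hμ.trans_le hμ']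
  refine div_le_of_le_mul₀ hden hK ?_
  calc ‖y + μ • s‖ ^ 2 ≤ (c ^ 2 / υ + 2 * μ) * ⟪s, y + μ • s⟫ :=
        norm_add_smul_sq_le_mul_inner hυ hμ.le hcurv hLip
    _ ≤ (c ^ 2 / υ + 2 * μmax) * ⟪s, y + μ • s⟫ := by gcongr

/-- Key estimate in Lemma 1: the curvature ratio of the regularized pair
`(s, y(μ))`, `y(μ) = y + μ s`, is bounded by `c²/υ + 2 μ_max`. -/
theorem stmt5 {m : ℕ} (s y : EuclideanSpace ℝ (Fin m)) (hs : s ≠ 0)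
    (υ c μmax μ : ℝ) (hυ : 0 < υ) (hc : 0 < c) (hμmax : 0 < μmax)
    (hμ : 0 < μ) (hμ' : μ ≤ μmax)
    (hcurv : ⟪s, y⟫ ≥ υ * ‖s‖ ^ 2) (hLip : ‖y‖ ≤ c * ‖s‖) :
    ‖y + μ • s‖ ^ 2 / ⟪s, y + μ • s⟫ ≤ c ^ 2 / υ + 2 * μmax :=
  stmt5_general s y υ c μmax μ hυ hμ hμ' hcurv hLip
end

section
/- Let υ > 0, c > 0, μ_max > 0, and let l be a positive integer. Let s_0, …, s_{l−1}, y_0, …, y_{l−1} ∈ ℝ^m and μ_0, …, μ_{l−1} ∈ (0, μ_max] satisfy, for each j, s_j ≠ 0, s_jᵀy_j ≥ υ‖s_j‖², and ‖y_j‖ ≤ c‖s_j‖. Define B_0 = I and, for 0 ≤ j ≤ l−1, B_{j+1} = B_j − (B_j s_j s_jᵀ B_j)/(s_jᵀ B_j s_j) + (y_j(μ_j) y_j(μ_j)ᵀ)/(s_jᵀ y_j(μ_j)), where y_j(μ_j) = y_j + μ_j s_j. Then each B_j is symmetric positive definite and λ_max(B_j) ≤ 1 + j·(c²/υ + 2μ_max)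 for all 0 ≤ j ≤ l; in particular λ_max(B_l) ≤ 1 + l·(c²/υ + 2μ_max). -/
open Matrix
open scoped RealInnerProductSpace

/-- The maximum eigenvalue of a (symmetric) real matrix. -/
noncomputable def lamMax {m : ℕ} (A : Matrix (Fin m) (Fin m) ℝ) : ℝ :=
  sSup {r : ℝ | ∃ v : Fin m → ℝ, v ≠ 0 ∧ A.mulVec v = r • v}

/-!
Write `q_B(v) = vᵀBv`. For symmetric `B`, the BFGS update with pair `(s, z)` has quadratic form
`q_B(v) - (sᵀBv)² / sᵀBs + (zᵀv)² / sᵀz`. The first two terms are the quadratic form of `B` at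
`v - ((sᵀBv)/(sᵀBs)) s`, hence positive unless `v` is a multiple of `s`, in which case the last term
is positive: the update preserves positive definiteness when `sᵀz > 0`. Dropping the subtracted
term and using Cauchy–Schwarz, the update raises the quadratic form on unit vectors by at most
`‖z‖² / sᵀz`, and for `z = y + μ s` the curvature and Lipschitz conditions bound this ratio by
`c²/υ + 2μ_max`. Summing over the `j` updates from `B₀ = I` bounds every Rayleigh quotient, hence
every eigenvalue, of `B_j` by `1 + j (c²/υ + 2μ_max)`.
-/

namespace Matrix

variable {n : Type*} [Fintype n]

section LinearOrderedRing

variable {R : Type*} [CommRing R] [LinearOrder R] [IsStrictOrderedRing R]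

lemma dotProduct_self_nonneg (v : n → R) : 0 ≤ v ⬝ᵥ v :=
  Finset.sum_nonneg fun i _ => mul_self_nonneg (v i)

lemma dotProduct_self_pos {v : n → R} (hv : v ≠ 0) : 0 < v ⬝ᵥ v :=
  (dotProduct_self_nonneg v).lt_of_ne' (dotProduct_self_eq_zero.not.mpr hv)

lemma sq_dotProduct_le_dotProduct_self_mul_dotProduct_self (u v : n → R) :
    (u ⬝ᵥ v) ^ 2 ≤ (u ⬝ᵥ u) * (v ⬝ᵥ v) := by
  simpa only [dotProduct, sq] using Finset.sum_mul_sq_le_sq_mul_sq Finset.univ u v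

end LinearOrderedRing

lemma dotProduct_vecMulVec_mulVec {α : Type*} [CommSemiring α] (u w x : n → α) :
    x ⬝ᵥ vecMulVec u w *ᵥ x = (x ⬝ᵥ u) * (w ⬝ᵥ x) := by
  rw [dotProduct_mulVec, vecMul_vecMulVec, smul_dotProduct, smul_eq_mul]

noncomputable def bfgsUpdate (B : Matrix n n ℝ) (s z : n → ℝ) : Matrix n n ℝ :=
  B - (1 / (s ⬝ᵥ B *ᵥ s)) • vecMulVec (B *ᵥ s) (s ᵥ* B) + (1 / (s ⬝ᵥ z)) • vecMulVec z z

variable {B : Matrix n n ℝ}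

lemma IsHermitian.vecMul_eq_mulVec (hB : B.IsHermitian) (v : n → ℝ) : v ᵥ* B = B *ᵥ v := by
  rw [← mulVec_transpose, ← conjTranspose_eq_transpose_of_trivial, hB.eq]

lemma IsHermitian.dotProduct_mulVec_comm (hB : B.IsHermitian) (u v : n → ℝ) :
    u ⬝ᵥ B *ᵥ v = v ⬝ᵥ B *ᵥ u := by
  rw [dotProduct_mulVec, hB.vecMul_eq_mulVec, dotProduct_comm]

lemma isHermitian_vecMulVec_self (u : n → ℝ) : (vecMulVec u u).IsHermitian := by
  simpa using (posSemidef_vecMulVec_self_star u).isHermitian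

lemma isHermitian_bfgsUpdate (hB : B.IsHermitian) (s z : n → ℝ) :
    (bfgsUpdate B s z).IsHermitian := by
  rw [Matrix.bfgsUpdate, hB.vecMul_eq_mulVec]
  exact (hB.sub ((isHermitian_vecMulVec_self _).smul (IsSelfAdjoint.all _))).add
    ((isHermitian_vecMulVec_self _).smul (IsSelfAdjoint.all _))

lemma IsHermitian.dotProduct_bfgsUpdate_mulVec (hB : B.IsHermitian) (s z v : n → ℝ) :
    v ⬝ᵥ bfgsUpdate B s z *ᵥ v
      = v ⬝ᵥ B *ᵥ v - (s ⬝ᵥ B *ᵥ v) ^ 2 / (s ⬝ᵥ B *ᵥ s) + (z ⬝ᵥ v) ^ 2 / (s ⬝ᵥ z) := by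
  simp only [Matrix.bfgsUpdate, hB.vecMul_eq_mulVec, add_mulVec, sub_mulVec, smul_mulVec,
    dotProduct_add, dotProduct_sub, dotProduct_smul, smul_eq_mul, dotProduct_vecMulVec_mulVec]
  rw [dotProduct_comm (B *ᵥ s) v, hB.dotProduct_mulVec_comm v s, dotProduct_comm v z]
  ring

lemma IsHermitian.dotProduct_mulVec_sub_sq_div (hB : B.IsHermitian) {s : n → ℝ}
    (hs : s ⬝ᵥ B *ᵥ s ≠ 0) (v : n → ℝ) :
    v ⬝ᵥ B *ᵥ v - (s ⬝ᵥ B *ᵥ v) ^ 2 / (s ⬝ᵥ B *ᵥ s)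
      = (v - ((s ⬝ᵥ B *ᵥ v) / (s ⬝ᵥ B *ᵥ s)) • s) ⬝ᵥ B *ᵥ
          (v - ((s ⬝ᵥ B *ᵥ v) / (s ⬝ᵥ B *ᵥ s)) • s) := by
  simp only [sub_dotProduct, smul_dotProduct, mulVec_sub, mulVec_smul, dotProduct_sub,
    dotProduct_smul, smul_eq_mul, hB.dotProduct_mulVec_comm v s]
  field_simp
  ring

lemma posDef_bfgsUpdate (hB : B.PosDef) {s z : n → ℝ} (hs : s ≠ 0) (hsz : 0 < s ⬝ᵥ z) :
    (bfgsUpdate B s z).PosDef := by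
  have hr : 0 < s ⬝ᵥ B *ᵥ s := by simpa using hB.dotProduct_mulVec_pos hs
  refine .of_dotProduct_mulVec_pos (isHermitian_bfgsUpdate hB.isHermitian s z) fun v hv => ?_
  rw [star_trivial, hB.isHermitian.dotProduct_bfgsUpdate_mulVec,
    hB.isHermitian.dotProduct_mulVec_sub_sq_div hr.ne']
  set t := (s ⬝ᵥ B *ᵥ v) / (s ⬝ᵥ B *ᵥ s)
  rcases eq_or_ne (v - t • s) 0 with hw | hw
  · have hv_eq : v = t • s := sub_eq_zero.mp hw
    have ht : t ≠ 0 := by rintro h; simp [h] at hv_eq; exact hv hv_eq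
    have hzv : z ⬝ᵥ v = t * (s ⬝ᵥ z) := by
      rw [hv_eq, dotProduct_smul, smul_eq_mul, dotProduct_comm]
    rw [hw, zero_dotProduct, zero_add, hzv]
    positivity
  · have hw_pos : 0 < (v - t • s) ⬝ᵥ B *ᵥ (v - t • s) := by
      simpa using hB.dotProduct_mulVec_pos hw
    positivity

lemma PosSemidef.dotProduct_bfgsUpdate_mulVec_le (hB : B.PosSemidef) {s z : n → ℝ}
    (hsz : 0 ≤ s ⬝ᵥ z) (v : n → ℝ) :
    v ⬝ᵥ bfgsUpdate B s z *ᵥ v ≤ v ⬝ᵥ B *ᵥ v + (z ⬝ᵥ z) / (s ⬝ᵥ z) * (v ⬝ᵥ v) := by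
  have hr : 0 ≤ s ⬝ᵥ B *ᵥ s := by simpa using hB.dotProduct_mulVec_nonneg s
  have hz_cs : (z ⬝ᵥ v) ^ 2 / (s ⬝ᵥ z) ≤ (z ⬝ᵥ z) / (s ⬝ᵥ z) * (v ⬝ᵥ v) := by
    rw [div_mul_eq_mul_div]
    exact div_le_div_of_nonneg_right
      (sq_dotProduct_le_dotProduct_self_mul_dotProduct_self z v) hsz
  have hsub : 0 ≤ (s ⬝ᵥ B *ᵥ v) ^ 2 / (s ⬝ᵥ B *ᵥ s) := by positivity
  rw [hB.isHermitian.dotProduct_bfgsUpdate_mulVec]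
  linarith

theorem posDef_and_dotProduct_mulVec_le_of_bfgsUpdate [DecidableEq n] {B : ℕ → Matrix n n ℝ}
    {s z : ℕ → n → ℝ} {κ : ℝ} {l : ℕ} (hB0 : B 0 = 1)
    (hBrec : ∀ j < l, B (j + 1) = bfgsUpdate (B j) (s j) (z j))
    (hs : ∀ j < l, s j ≠ 0) (hsz : ∀ j < l, 0 < s j ⬝ᵥ z j)
    (hzz : ∀ j < l, z j ⬝ᵥ z j ≤ κ * (s j ⬝ᵥ z j)) :
    ∀ j ≤ l, (B j).PosDef ∧ ∀ v, v ⬝ᵥ B j *ᵥ v ≤ (1 + j * κ) * (v ⬝ᵥ v) := by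
  intro j
  induction j with
  | zero => intro _; simp [hB0, PosDef.one]
  | succ j ih =>
    intro hj
    obtain ⟨hpd, hle⟩ := ih (by omega)
    have hjl : j < l := hj
    have hratio : (z j ⬝ᵥ z j) / (s j ⬝ᵥ z j) ≤ κ := (div_le_iff₀ (hsz j hjl)).mpr (hzz j hjl)
    rw [hBrec j hjl]
    refine ⟨posDef_bfgsUpdate hpd (hs j hjl) (hsz j hjl), fun v => ?_⟩
    calc v ⬝ᵥ bfgsUpdate (B j) (s j) (z j) *ᵥ v
        ≤ v ⬝ᵥ B j *ᵥ v + (z j ⬝ᵥ z j) / (s j ⬝ᵥ z j) * (v ⬝ᵥ v) :=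
          hpd.posSemidef.dotProduct_bfgsUpdate_mulVec_le (hsz j hjl).le v
      _ ≤ (1 + j * κ) * (v ⬝ᵥ v) + κ * (v ⬝ᵥ v) :=
          add_le_add (hle v) (mul_le_mul_of_nonneg_right hratio (dotProduct_self_nonneg v))
      _ = (1 + ↑(j + 1) * κ) * (v ⬝ᵥ v) := by push_cast; ring

end Matrix

section RegularizedPair

variable {E : Type*} [NormedAddCommGroup E] [InnerProductSpace ℝ E] {s y : E} {υ c μ μmax : ℝ}

lemma inner_add_smul_self_pos (hυ : 0 < υ) (hμ : 0 ≤ μ) (hs : s ≠ 0)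
    (hcurv : υ * ‖s‖ ^ 2 ≤ ⟪s, y⟫) : 0 < ⟪s, y + μ • s⟫ := by
  have hs_pos : 0 < ‖s‖ := norm_pos_iff.mpr hs
  rw [inner_add_right, inner_smul_right, real_inner_self_eq_norm_sq]
  linarith [mul_pos hυ (pow_pos hs_pos 2), mul_nonneg hμ (sq_nonneg ‖s‖)]

lemma norm_add_smul_sq_le (hυ : 0 < υ) (hμ : 0 ≤ μ) (hμmax : μ ≤ μmax)
    (hcurv : υ * ‖s‖ ^ 2 ≤ ⟪s, y⟫) (hLip : ‖y‖ ≤ c * ‖s‖) :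
    ‖y + μ • s‖ ^ 2 ≤ (c ^ 2 / υ + 2 * μmax) * ⟪s, y + μ • s⟫ := by
  have hnorm : ‖y + μ • s‖ ^ 2 = ‖y‖ ^ 2 + 2 * μ * ⟪s, y⟫ + μ ^ 2 * ‖s‖ ^ 2 := by
    rw [norm_add_sq_real, inner_smul_right, norm_smul, real_inner_comm, mul_pow,
      Real.norm_eq_abs, sq_abs]
    ring
  have hinner : ⟪s, y + μ • s⟫ = ⟪s, y⟫ + μ * ‖s‖ ^ 2 := by
    rw [inner_add_right, inner_smul_right, real_inner_self_eq_norm_sq]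
  have hy : ‖y‖ ^ 2 ≤ c ^ 2 / υ * ⟪s, y⟫ :=
    calc ‖y‖ ^ 2 ≤ (c * ‖s‖) ^ 2 := pow_le_pow_left₀ (norm_nonneg y) hLip 2
      _ = c ^ 2 / υ * (υ * ‖s‖ ^ 2) := by field_simp
      _ ≤ c ^ 2 / υ * ⟪s, y⟫ := by gcongr
  have hsy : 0 ≤ ⟪s, y⟫ := le_trans (by positivity) hcurv
  have hsz : 0 ≤ ⟪s, y + μ • s⟫ := by rw [hinner]; positivity
  calc ‖y + μ • s‖ ^ 2
      ≤ c ^ 2 / υ * ⟪s, y + μ • s⟫ + 2 * μ * ⟪s, y + μ • s⟫ := by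
        rw [hnorm, hinner]
        nlinarith [mul_nonneg (div_nonneg (sq_nonneg c) hυ.le) (mul_nonneg hμ (sq_nonneg ‖s‖)),
          mul_nonneg (sq_nonneg μ) (sq_nonneg ‖s‖)]
    _ ≤ (c ^ 2 / υ + 2 * μmax) * ⟪s, y + μ • s⟫ := by rw [add_mul]; gcongr

end RegularizedPair

lemma EuclideanSpace.real_inner_eq_dotProduct {ι : Type*} [Fintype ι] (x y : EuclideanSpace ℝ ι) :
    ⟪x, y⟫ = (x : ι → ℝ) ⬝ᵥ (y : ι → ℝ) := by
  simp [EuclideanSpace.inner_eq_star_dotProduct, dotProduct_comm]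

lemma EuclideanSpace.norm_sq_eq_dotProduct {ι : Type*} [Fintype ι] (x : EuclideanSpace ℝ ι) :
    ‖x‖ ^ 2 = (x : ι → ℝ) ⬝ᵥ (x : ι → ℝ) := by
  rw [← real_inner_self_eq_norm_sq, EuclideanSpace.real_inner_eq_dotProduct]

/-- For `m = 0` there are no eigenvalues and `lamMax A = sSup ∅ = 0`. -/
lemma lamMax_le_of_dotProduct_mulVec_le {m : ℕ} {A : Matrix (Fin m) (Fin m) ℝ} {K : ℝ}
    (hK : 0 ≤ K) (h : ∀ v, v ⬝ᵥ A *ᵥ v ≤ K * (v ⬝ᵥ v)) : lamMax A ≤ K := by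
  refine Real.sSup_le ?_ hK
  rintro r ⟨v, hv, hAv⟩
  have hv_le := h v
  rw [hAv, dotProduct_smul, smul_eq_mul] at hv_le
  exact le_of_mul_le_mul_right hv_le (dotProduct_self_pos hv)

theorem stmt6_general {m : ℕ} (υ c μmax : ℝ) (hυ : 0 < υ)
    (hμmax : 0 < μmax) (l : ℕ)
    (s y : ℕ → EuclideanSpace ℝ (Fin m)) (μ : ℕ → ℝ)
    (hμ : ∀ j < l, 0 < μ j ∧ μ j ≤ μmax)
    (hs : ∀ j < l, s j ≠ 0)
    (hcurv : ∀ j < l, ⟪s j, y j⟫ ≥ υ * ‖s j‖ ^ 2)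
    (hLip : ∀ j < l, ‖y j‖ ≤ c * ‖s j‖)
    (B : ℕ → Matrix (Fin m) (Fin m) ℝ)
    (hB0 : B 0 = 1)
    (hBrec : ∀ j < l, B (j + 1) = B j
      - (1 / ((s j : Fin m → ℝ) ⬝ᵥ (B j) *ᵥ (s j : Fin m → ℝ))) •
          vecMulVec ((B j) *ᵥ (s j : Fin m → ℝ)) ((s j : Fin m → ℝ) ᵥ* (B j))
      + (1 / ((s j : Fin m → ℝ) ⬝ᵥ ((y j : Fin m → ℝ) + μ j • (s j : Fin m → ℝ)))) •
          vecMulVec ((y j : Fin m → ℝ) + μ j • (s j : Fin m → ℝ))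
            ((y j : Fin m → ℝ) + μ j • (s j : Fin m → ℝ))) :
    ∀ j ≤ l, (B j).PosDef ∧ lamMax (B j) ≤ 1 + j * (c ^ 2 / υ + 2 * μmax) := by
  have hpair : ∀ j < l, 0 < ⟪s j, y j + μ j • s j⟫ ∧
      ‖y j + μ j • s j‖ ^ 2 ≤ (c ^ 2 / υ + 2 * μmax) * ⟪s j, y j + μ j • s j⟫ := fun j hj =>
    ⟨inner_add_smul_self_pos hυ (hμ j hj).1.le (hs j hj) (hcurv j hj),
      norm_add_smul_sq_le hυ (hμ j hj).1.le (hμ j hj).2 (hcurv j hj) (hLip j hj)⟩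
  simp only [EuclideanSpace.real_inner_eq_dotProduct, EuclideanSpace.norm_sq_eq_dotProduct,
    WithLp.ofLp_add, WithLp.ofLp_smul] at hpair
  have hiter := posDef_and_dotProduct_mulVec_le_of_bfgsUpdate hB0 hBrec
    (fun j hj => by simpa using hs j hj) (fun j hj => (hpair j hj).1) (fun j hj => (hpair j hj).2)
  intro j hj
  obtain ⟨hpd, hle⟩ := hiter j hj
  exact ⟨hpd, lamMax_le_of_dotProduct_mulVec_le (by positivity) hle⟩

/-- First conclusion of Lemma 1: starting from the identity, `l` regularized BFGS
updates with pairs `(s_j, y_j + μ_j s_j)` satisfying the modified curvature condition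
and the Lipschitz bound yield symmetric positive definite matrices whose maximal
eigenvalues are uniformly bounded. -/
theorem stmt6 {m : ℕ} (υ c μmax : ℝ) (hυ : 0 < υ) (hc : 0 < c)
    (hμmax : 0 < μmax) (l : ℕ) (hl : 0 < l)
    (s y : ℕ → EuclideanSpace ℝ (Fin m)) (μ : ℕ → ℝ)
    (hμ : ∀ j < l, 0 < μ j ∧ μ j ≤ μmax)
    (hs : ∀ j < l, s j ≠ 0)
    (hcurv : ∀ j < l, ⟪s j, y j⟫ ≥ υ * ‖s j‖ ^ 2)
    (hLip : ∀ j < l, ‖y j‖ ≤ c * ‖s j‖)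
    (B : ℕ → Matrix (Fin m) (Fin m) ℝ)
    (hB0 : B 0 = 1)
    (hBrec : ∀ j < l, B (j + 1) = B j
      - (1 / ((s j : Fin m → ℝ) ⬝ᵥ (B j) *ᵥ (s j : Fin m → ℝ))) •
          vecMulVec ((B j) *ᵥ (s j : Fin m → ℝ)) ((s j : Fin m → ℝ) ᵥ* (B j))
      + (1 / ((s j : Fin m → ℝ) ⬝ᵥ ((y j : Fin m → ℝ) + μ j • (s j : Fin m → ℝ)))) •
          vecMulVec ((y j : Fin m → ℝ) + μ j • (s j : Fin m → ℝ))
            ((y j : Fin m → ℝ) + μ j • (s j : Fin m → ℝ))) :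
    ∀ j ≤ l, (B j).PosDef ∧ lamMax (B j) ≤ 1 + j * (c ^ 2 / υ + 2 * μmax) :=
  stmt6_general υ c μmax hυ hμmax l s y μ hμ hs hcurv hLip B hB0 hBrec
end

section
/- Let m ≥ 2 and let s, y ∈ ℝ^m with sᵀy > 0. Define N = I − (y sᵀ)/(sᵀy). Then λ_max(Nᵀ N) = ‖y‖² ‖s‖² / (sᵀy)². -/
/-!
Write `c = sᵀy`, so that `N v = v - (sᵀv / c) y`. Expanding, `c² ‖N v‖² ≤ ‖y‖² ‖s‖² ‖v‖²` is
the nonnegativity of the Gram determinant of `s, v, y` (after dropping `‖s‖² (yᵀv)² ≥ 0`), so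
every eigenvalue of `NᵀN` is at most `t = ‖y‖² ‖s‖² / c²`. The bound is attained: the component
`s - (c / ‖y‖²) y` of `s` orthogonal to `y` is an eigenvector for `t`, and when it vanishes,
`t = 1` and `N` fixes every vector orthogonal to `y`.
-/

open Matrix

section Field

variable {K n : Type*} [Field K] [Fintype n] [DecidableEq n]

-- The projection onto `sᗮ` along `span {y}`.
def complObliqueProj (s y : n → K) : Matrix n n K :=
  1 - (1 / (s ⬝ᵥ y)) • vecMulVec y s

theorem complObliqueProj_mulVec (s y v : n → K) :
    complObliqueProj s y *ᵥ v = v - ((s ⬝ᵥ v) / (s ⬝ᵥ y)) • y := by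
  rw [complObliqueProj, sub_mulVec, one_mulVec, smul_mulVec, vecMulVec_mulVec, op_smul_eq_smul,
    smul_smul, one_div_mul_eq_div]

theorem transpose_complObliqueProj (s y : n → K) :
    (complObliqueProj s y)ᵀ = complObliqueProj y s := by
  rw [complObliqueProj, complObliqueProj, transpose_sub, transpose_one, transpose_smul,
    transpose_vecMulVec, dotProduct_comm]

theorem transpose_mul_complObliqueProj_mulVec (s y v : n → K) :
    ((complObliqueProj s y)ᵀ * complObliqueProj s y) *ᵥ v =
      complObliqueProj y s *ᵥ complObliqueProj s y *ᵥ v := by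
  rw [← mulVec_mulVec, transpose_complObliqueProj]

theorem transpose_mul_complObliqueProj_mulVec_of_orthogonal {s y w : n → K}
    (hs : s ⬝ᵥ w = 0) (hy : y ⬝ᵥ w = 0) :
    ((complObliqueProj s y)ᵀ * complObliqueProj s y) *ᵥ w = w := by
  simp [transpose_mul_complObliqueProj_mulVec, complObliqueProj_mulVec, hs, hy]

theorem transpose_mul_complObliqueProj_mulVec_sub {s y : n → K} (hsy : s ⬝ᵥ y ≠ 0)
    (hy : y ⬝ᵥ y ≠ 0) :
    ((complObliqueProj s y)ᵀ * complObliqueProj s y) *ᵥ (s - ((s ⬝ᵥ y) / (y ⬝ᵥ y)) • y) =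
      ((y ⬝ᵥ y) * (s ⬝ᵥ s) / (s ⬝ᵥ y) ^ 2) • (s - ((s ⬝ᵥ y) / (y ⬝ᵥ y)) • y) := by
  ext i
  simp only [transpose_mul_complObliqueProj_mulVec, complObliqueProj_mulVec, dotProduct_sub,
    dotProduct_smul, smul_eq_mul, dotProduct_comm y s, Pi.sub_apply, Pi.smul_apply]
  field_simp
  ring

end Field

section Real

variable {n : Type*} [Fintype n]

theorem gram_det_nonneg (u v w : n → ℝ) :
    0 ≤ (u ⬝ᵥ u) * (v ⬝ᵥ v) * (w ⬝ᵥ w) + 2 * (u ⬝ᵥ v) * (v ⬝ᵥ w) * (w ⬝ᵥ u)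
      - (u ⬝ᵥ u) * (v ⬝ᵥ w) ^ 2 - (v ⬝ᵥ v) * (w ⬝ᵥ u) ^ 2 - (w ⬝ᵥ w) * (u ⬝ᵥ v) ^ 2 := by
  let A : Matrix n (Fin 3) ℝ := of fun i j => ![u, v, w] j i
  have hA : ∀ a b : Fin 3, (Aᵀ * A) a b = ![u, v, w] a ⬝ᵥ ![u, v, w] b := fun a b => by
    simp [A, mul_apply, dotProduct]
  have h := (posSemidef_conjTranspose_mul_self A).det_nonneg
  rw [conjTranspose_eq_transpose_of_trivial] at h
  simp only [det_fin_three, hA, cons_val_zero, cons_val_one, cons_val, dotProduct_comm w v,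
    dotProduct_comm v u, dotProduct_comm u w] at h
  linarith

theorem complObliqueProj_mulVec_dotProduct_self_le [DecidableEq n] {s y : n → ℝ}
    (hsy : s ⬝ᵥ y ≠ 0) (v : n → ℝ) :
    complObliqueProj s y *ᵥ v ⬝ᵥ complObliqueProj s y *ᵥ v ≤
      (y ⬝ᵥ y) * (s ⬝ᵥ s) / (s ⬝ᵥ y) ^ 2 * (v ⬝ᵥ v) := by
  have hgram := gram_det_nonneg s v y
  have hexpand : (s ⬝ᵥ y) ^ 2 * (complObliqueProj s y *ᵥ v ⬝ᵥ complObliqueProj s y *ᵥ v) =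
      (s ⬝ᵥ y) ^ 2 * (v ⬝ᵥ v) - 2 * (s ⬝ᵥ v) * (y ⬝ᵥ v) * (s ⬝ᵥ y) + (s ⬝ᵥ v) ^ 2 * (y ⬝ᵥ y) := by
    simp only [complObliqueProj_mulVec, dotProduct_sub, sub_dotProduct, dotProduct_smul,
      smul_dotProduct, smul_eq_mul, dotProduct_comm v y]
    field_simp
    ring
  rw [div_mul_eq_mul_div, le_div_iff₀ (by positivity), mul_comm, hexpand]
  rw [dotProduct_comm v y, dotProduct_comm y s] at hgram
  have hss : 0 ≤ s ⬝ᵥ s := by simpa using dotProduct_self_star_nonneg s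
  nlinarith [mul_nonneg hss (sq_nonneg (y ⬝ᵥ v))]

theorem le_of_transpose_mul_mulVec_eq_smul {B : Matrix n n ℝ} {t : ℝ}
    (hB : ∀ w, B *ᵥ w ⬝ᵥ B *ᵥ w ≤ t * (w ⬝ᵥ w)) {r : ℝ} {v : n → ℝ} (hv : v ≠ 0)
    (hr : (Bᵀ * B) *ᵥ v = r • v) : r ≤ t := by
  have hvv : 0 < v ⬝ᵥ v := by
    simpa using (dotProduct_self_star_nonneg v).lt_of_ne' (by simpa using hv)
  have hrv : r * (v ⬝ᵥ v) = B *ᵥ v ⬝ᵥ B *ᵥ v := by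
    rw [← smul_eq_mul, ← dotProduct_smul, ← hr, ← mulVec_mulVec, dotProduct_mulVec,
      vecMul_transpose]
  exact le_of_mul_le_mul_right (hrv ▸ hB v) hvv

theorem isGreatest_eigenvalues_transpose_mul_complObliqueProj [Nontrivial n] [DecidableEq n]
    {s y : n → ℝ} (hsy : s ⬝ᵥ y ≠ 0) :
    IsGreatest {r | ∃ v, v ≠ 0 ∧ ((complObliqueProj s y)ᵀ * complObliqueProj s y) *ᵥ v = r • v}
      ((y ⬝ᵥ y) * (s ⬝ᵥ s) / (s ⬝ᵥ y) ^ 2) := by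
  refine ⟨?_, fun r ⟨v, hv, hr⟩ ↦ le_of_transpose_mul_mulVec_eq_smul
    (complObliqueProj_mulVec_dotProduct_self_le hsy) hv hr⟩
  have hyy : y ⬝ᵥ y ≠ 0 := fun h ↦ hsy (by rw [dotProduct_self_eq_zero.mp h, dotProduct_zero])
  obtain hu | hu := ne_or_eq (s - ((s ⬝ᵥ y) / (y ⬝ᵥ y)) • y) 0
  · exact ⟨_, hu, transpose_mul_complObliqueProj_mulVec_sub hsy hyy⟩
  · rw [sub_eq_zero] at hu
    obtain ⟨w, hw, hwy⟩ := exists_ne_zero_dotProduct_eq_zero y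
    have hyw : y ⬝ᵥ w = 0 := by rwa [dotProduct_comm]
    have hsw : s ⬝ᵥ w = 0 := by rw [hu, smul_dotProduct, hyw, smul_zero]
    have hone : (y ⬝ᵥ y) * (s ⬝ᵥ s) / (s ⬝ᵥ y) ^ 2 = 1 := by
      rw [hu]
      simp only [smul_dotProduct, dotProduct_smul, smul_eq_mul]
      field_simp
    refine ⟨w, hw, ?_⟩
    rw [hone, one_smul]
    exact transpose_mul_complObliqueProj_mulVec_of_orthogonal hsw hyw

end Real

/-- For `N = I − y sᵀ/(sᵀy)` in dimension `m ≥ 2`, the maximum eigenvalue of `NᵀN`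
is `‖y‖²‖s‖²/(sᵀy)²`. -/
theorem stmt7 {m : ℕ} (hm : 2 ≤ m) (s y : Fin m → ℝ) (hsy : 0 < s ⬝ᵥ y) :
    lamMax ((1 - (1 / (s ⬝ᵥ y)) • vecMulVec y s)ᵀ *
        (1 - (1 / (s ⬝ᵥ y)) • vecMulVec y s))
      = (y ⬝ᵥ y) * (s ⬝ᵥ s) / (s ⬝ᵥ y) ^ 2 := by
  have : Nontrivial (Fin m) := Fin.nontrivial_iff_two_le.mpr hm
  exact (isGreatest_eigenvalues_transpose_mul_complObliqueProj hsy.ne').csSup_eq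
end

section
/- Let g, y, d_prev ∈ ℝ^n, let α > 0, set s = α d_prev, and assume sᵀy > 0. Let 0 ≤ ξ₃ < 1 and assume |(gᵀy)(gᵀs)| ≤ ξ₃ (sᵀy) ‖g‖². Define the Hestenes–Stiefel direction d = −g + ((gᵀy)/(d_prevᵀy)) d_prev. Then gᵀd ≤ −(1 − ξ₃)‖g‖². -/
open scoped RealInnerProductSpace

/-- The term `⟪g, y⟫ ⟪g, d⟫ / ⟪d, y⟫` is invariant under scaling `d`, so condition (2.10) on the
step `α • d` bounds it by `ξ ‖g‖²`. -/
theorem inner_neg_add_hestenesStiefel_le {F : Type*} [NormedAddCommGroup F]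
    [InnerProductSpace ℝ F] {g y d : F} {α ξ : ℝ} (hsy : 0 < ⟪α • d, y⟫)
    (hcond : |⟪g, y⟫ * ⟪g, α • d⟫| ≤ ξ * ⟪α • d, y⟫ * ‖g‖ ^ 2) :
    ⟪g, -g + (⟪g, y⟫ / ⟪d, y⟫) • d⟫ ≤ -(1 - ξ) * ‖g‖ ^ 2 := by
  have hα : α ≠ 0 := by rintro rfl; simp at hsy
  have hdy : ⟪d, y⟫ ≠ 0 := fun h => by simp [real_inner_smul_left, h] at hsy
  have hscale : ⟪g, y⟫ / ⟪d, y⟫ * ⟪g, d⟫ = ⟪g, y⟫ * ⟪g, α • d⟫ / ⟪α • d, y⟫ := by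
    rw [real_inner_smul_left, real_inner_smul_right]
    field_simp
  have hcurv : ⟪g, y⟫ * ⟪g, α • d⟫ / ⟪α • d, y⟫ ≤ ξ * ‖g‖ ^ 2 := by
    rw [div_le_iff₀ hsy]
    linarith [le_abs_self (⟪g, y⟫ * ⟪g, α • d⟫)]
  calc ⟪g, -g + (⟪g, y⟫ / ⟪d, y⟫) • d⟫ = -‖g‖ ^ 2 + ⟪g, y⟫ / ⟪d, y⟫ * ⟪g, d⟫ := by
        rw [inner_add_right, inner_neg_right, real_inner_smul_right, real_inner_self_eq_norm_sq]
    _ ≤ -‖g‖ ^ 2 + ξ * ‖g‖ ^ 2 := by rw [hscale]; gcongr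
    _ = -(1 - ξ) * ‖g‖ ^ 2 := by ring

theorem stmt14_general {n : ℕ} (g y dprev s : EuclideanSpace ℝ (Fin n)) (α : ℝ)
    (hs : s = α • dprev) (hsy : 0 < ⟪s, y⟫)
    (ξ₃ : ℝ)
    (hcond : |⟪g, y⟫ * ⟪g, s⟫| ≤ ξ₃ * ⟪s, y⟫ * ‖g‖ ^ 2) :
    ⟪g, -g + (⟪g, y⟫ / ⟪dprev, y⟫) • dprev⟫ ≤ -(1 - ξ₃) * ‖g‖ ^ 2 := by
  subst hs
  exact inner_neg_add_hestenesStiefel_le hsy hcond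

/-- Sufficient descent of the Hestenes–Stiefel direction under condition (2.10)
(part of Lemma 3). -/
theorem stmt14 {n : ℕ} (g y dprev s : EuclideanSpace ℝ (Fin n)) (α : ℝ)
    (hα : 0 < α) (hs : s = α • dprev) (hsy : 0 < ⟪s, y⟫)
    (ξ₃ : ℝ) (hξ₃0 : 0 ≤ ξ₃) (hξ₃1 : ξ₃ < 1)
    (hcond : |⟪g, y⟫ * ⟪g, s⟫| ≤ ξ₃ * ⟪s, y⟫ * ‖g‖ ^ 2) :
    ⟪g, -g + (⟪g, y⟫ / ⟪dprev, y⟫) • dprev⟫ ≤ -(1 - ξ₃) * ‖g‖ ^ 2 :=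
  stmt14_general g y dprev s α hs hsy ξ₃ hcond
end

section
/- Let g, y, d_prev ∈ ℝ^n, let α > 0, set s = α d_prev, and assume s ≠ 0. Let ξ₁ > 0 and L > 0 and assume sᵀy ≥ ξ₁ ‖s‖² and ‖y‖ ≤ L ‖s‖. Define the Hestenes–Stiefel direction d = −g + ((gᵀy)/(d_prevᵀy)) d_prev. Then ‖d‖ ≤ (1 + L/ξ₁) ‖g‖. -/
open scoped RealInnerProductSpace

/-!
The Hestenes–Stiefel direction does not change when `d_{k-1}` is rescaled by a nonzero factor, so
it may be written with `s = α d_{k-1}` in place of `d_{k-1}`. Then the correction term has norm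
`|gᵀy| ‖s‖ / sᵀy ≤ ‖g‖ L ‖s‖² / (ξ₁ ‖s‖²) = (L / ξ₁) ‖g‖`, and the triangle inequality concludes.
-/

variable {E : Type*} [NormedAddCommGroup E] [InnerProductSpace ℝ E]

noncomputable def hestenesStiefelDirection (g y d : E) : E :=
  -g + (⟪g, y⟫ / ⟪d, y⟫) • d

theorem hestenesStiefelDirection_smul (g y d : E) {c : ℝ} (hc : c ≠ 0) :
    hestenesStiefelDirection g y (c • d) = hestenesStiefelDirection g y d := by
  unfold hestenesStiefelDirection
  rw [real_inner_smul_left, smul_smul, div_mul_eq_mul_div, mul_comm c,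
    mul_div_mul_right _ _ hc]

theorem norm_inner_div_inner_smul_le {g y s : E} (hs : s ≠ 0) {ξ L : ℝ} (hξ : 0 < ξ)
    (hcurv : ξ * ‖s‖ ^ 2 ≤ ⟪s, y⟫) (hLip : ‖y‖ ≤ L * ‖s‖) :
    ‖(⟪g, y⟫ / ⟪s, y⟫) • s‖ ≤ L / ξ * ‖g‖ := by
  have hs_pos : 0 < ‖s‖ := norm_pos_iff.mpr hs
  have hsy_pos : 0 < ⟪s, y⟫ := lt_of_lt_of_le (by positivity) hcurv
  have hgy : |⟪g, y⟫| ≤ ‖g‖ * (L * ‖s‖) :=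
    (abs_real_inner_le_norm g y).trans (mul_le_mul_of_nonneg_left hLip (norm_nonneg g))
  rw [norm_smul, Real.norm_eq_abs, abs_div, abs_of_pos hsy_pos, div_mul_eq_mul_div,
    div_le_iff₀ hsy_pos]
  calc |⟪g, y⟫| * ‖s‖ ≤ ‖g‖ * (L * ‖s‖) * ‖s‖ := by gcongr
    _ = L / ξ * ‖g‖ * (ξ * ‖s‖ ^ 2) := by field_simp
    _ ≤ L / ξ * ‖g‖ * ⟪s, y⟫ := by
        have hL : 0 ≤ L := nonneg_of_mul_nonneg_left ((norm_nonneg y).trans hLip) hs_pos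
        gcongr

theorem norm_hestenesStiefelDirection_le {g y s : E} (hs : s ≠ 0) {ξ L : ℝ} (hξ : 0 < ξ)
    (hcurv : ξ * ‖s‖ ^ 2 ≤ ⟪s, y⟫) (hLip : ‖y‖ ≤ L * ‖s‖) :
    ‖hestenesStiefelDirection g y s‖ ≤ (1 + L / ξ) * ‖g‖ :=
  calc ‖hestenesStiefelDirection g y s‖ ≤ ‖-g‖ + ‖(⟪g, y⟫ / ⟪s, y⟫) • s‖ := norm_add_le _ _
    _ ≤ ‖g‖ + L / ξ * ‖g‖ := by
        rw [norm_neg]; gcongr; exact norm_inner_div_inner_smul_le hs hξ hcurv hLip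
    _ = (1 + L / ξ) * ‖g‖ := by ring

theorem stmt15_general {n : ℕ} (g y dprev s : EuclideanSpace ℝ (Fin n)) (α : ℝ)
    (hs : s = α • dprev) (hs0 : s ≠ 0)
    (ξ₁ L : ℝ) (hξ₁ : 0 < ξ₁)
    (hcurv : ⟪s, y⟫ ≥ ξ₁ * ‖s‖ ^ 2) (hLip : ‖y‖ ≤ L * ‖s‖) :
    ‖-g + (⟪g, y⟫ / ⟪dprev, y⟫) • dprev‖ ≤ (1 + L / ξ₁) * ‖g‖ := by
  have hα : α ≠ 0 := by
    rintro rfl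
    exact hs0 (by rw [hs, zero_smul])
  have hbound := norm_hestenesStiefelDirection_le (g := g) hs0 hξ₁ hcurv hLip
  rwa [hs, hestenesStiefelDirection_smul _ _ _ hα] at hbound

/-- Linear growth of the Hestenes–Stiefel direction (part of Lemma 4). -/
theorem stmt15 {n : ℕ} (g y dprev s : EuclideanSpace ℝ (Fin n)) (α : ℝ)
    (hα : 0 < α) (hs : s = α • dprev) (hs0 : s ≠ 0)
    (ξ₁ L : ℝ) (hξ₁ : 0 < ξ₁) (hL : 0 < L)
    (hcurv : ⟪s, y⟫ ≥ ξ₁ * ‖s‖ ^ 2) (hLip : ‖y‖ ≤ L * ‖s‖) :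
    ‖-g + (⟪g, y⟫ / ⟪dprev, y⟫) • dprev‖ ≤ (1 + L / ξ₁) * ‖g‖ :=
  stmt15_general g y dprev s α hs hs0 ξ₁ L hξ₁ hcurv hLip
end

section
/- Let g, s, y ∈ ℝ^n with g ≠ 0, y ≠ 0, and sᵀy > 0. Set ρ = (3/2)(‖y‖²/(sᵀy))‖g‖² and Δ = ρ (sᵀy) − (gᵀy)², and define d = ū g + v̄ s with ū = ((gᵀy)(gᵀs) − (sᵀy)‖g‖²)/Δ and v̄ = ((gᵀy)‖g‖² − ρ (gᵀs))/Δ. Then gᵀd ≤ −‖g‖⁴/ρ = −(2/3)((sᵀy)/‖y‖²)‖g‖². In particular, if ‖y‖²/(sᵀy) ≤ ξ₂ for some ξ₂ > 0, then gᵀd ≤ −(2/(3ξ₂))‖g‖². -/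
open scoped RealInnerProductSpace

/-! The direction solves the 2×2 system with matrix `M = [[ρ, gᵀy], [gᵀy, sᵀy]]` and right-hand side
`-(‖g‖², gᵀs)`, so `gᵀd = -wᵀM⁻¹w` with `w = (‖g‖², gᵀs)`. For a positive definite `M`, the
`(1,1)` entry of `M⁻¹` is at least `1/ρ` (the Schur complement), whence `gᵀd ≤ -‖g‖⁴/ρ`.
The choice of `ρ` makes `M` positive definite by Cauchy–Schwarz. -/

/-- `wᵀM⁻¹w ≥ w₁²/ρ` for a positive definite `M = [[ρ, a], [a, c]]`, written through the adjugate. -/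
theorem sq_div_le_inv_quadForm_two {ρ a c w₁ w₂ : ℝ} (hρ : 0 < ρ) (hdet : 0 < ρ * c - a ^ 2) :
    w₁ ^ 2 / ρ ≤ (c * w₁ ^ 2 - 2 * a * w₁ * w₂ + ρ * w₂ ^ 2) / (ρ * c - a ^ 2) := by
  rw [div_le_div_iff₀ hρ hdet]
  nlinarith [sq_nonneg (a * w₁ - ρ * w₂)]

theorem sq_inner_lt_three_halves_mul {F : Type*} [NormedAddCommGroup F] [InnerProductSpace ℝ F]
    {g y : F} (hg : g ≠ 0) (hy : y ≠ 0) : ⟪g, y⟫ ^ 2 < (3 / 2) * ‖y‖ ^ 2 * ‖g‖ ^ 2 := by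
  have hcs := real_inner_mul_inner_self_le g y
  rw [real_inner_self_eq_norm_sq, real_inner_self_eq_norm_sq] at hcs
  have : 0 < ‖g‖ ^ 2 * ‖y‖ ^ 2 := by positivity
  nlinarith

/-- Sufficient descent of the SMCG direction in case (ii) (part of Lemma 3):
`gᵀd ≤ −‖g‖⁴/ρ = −(2/3)((sᵀy)/‖y‖²)‖g‖²`, and in particular
`gᵀd ≤ −(2/(3ξ₂))‖g‖²` whenever `‖y‖²/(sᵀy) ≤ ξ₂`. -/
theorem stmt18 {n : ℕ} (g s y : EuclideanSpace ℝ (Fin n)) (hg : g ≠ 0) (hy : y ≠ 0)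
    (hsy : 0 < ⟪s, y⟫) (ρ Δ : ℝ)
    (hρ : ρ = (3 / 2) * (‖y‖ ^ 2 / ⟪s, y⟫) * ‖g‖ ^ 2)
    (hΔ : Δ = ρ * ⟪s, y⟫ - ⟪g, y⟫ ^ 2)
    (d : EuclideanSpace ℝ (Fin n))
    (hd : d = ((⟪g, y⟫ * ⟪g, s⟫ - ⟪s, y⟫ * ‖g‖ ^ 2) / Δ) • g
      + ((⟪g, y⟫ * ‖g‖ ^ 2 - ρ * ⟪g, s⟫) / Δ) • s) :
    ⟪g, d⟫ ≤ -(‖g‖ ^ 4 / ρ) ∧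
      -(‖g‖ ^ 4 / ρ) = -((2 / 3) * (⟪s, y⟫ / ‖y‖ ^ 2) * ‖g‖ ^ 2) ∧
      ∀ ξ₂ : ℝ, 0 < ξ₂ → ‖y‖ ^ 2 / ⟪s, y⟫ ≤ ξ₂ →
        ⟪g, d⟫ ≤ -(2 / (3 * ξ₂)) * ‖g‖ ^ 2 := by
  have hρpos : 0 < ρ := by rw [hρ]; positivity
  have hρsy : ρ * ⟪s, y⟫ = (3 / 2) * ‖y‖ ^ 2 * ‖g‖ ^ 2 := by rw [hρ]; field_simp
  have hΔpos : 0 < Δ := by linarith [sq_inner_lt_three_halves_mul hg hy]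
  have hgd : ⟪g, d⟫ = -((⟪s, y⟫ * (‖g‖ ^ 2) ^ 2 - 2 * ⟪g, y⟫ * ‖g‖ ^ 2 * ⟪g, s⟫
      + ρ * ⟪g, s⟫ ^ 2) / Δ) := by
    rw [hd, inner_add_right, real_inner_smul_right, real_inner_smul_right,
      real_inner_self_eq_norm_sq]
    ring
  have hdescent : ⟪g, d⟫ ≤ -(‖g‖ ^ 4 / ρ) := by
    rw [hgd, neg_le_neg_iff, show ‖g‖ ^ 4 = (‖g‖ ^ 2) ^ 2 by ring, hΔ]
    exact sq_div_le_inv_quadForm_two hρpos (hΔ ▸ hΔpos)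
  have hrewrite : -(‖g‖ ^ 4 / ρ) = -((2 / 3) * (⟪s, y⟫ / ‖y‖ ^ 2) * ‖g‖ ^ 2) := by
    rw [hρ]; field_simp
  refine ⟨hdescent, hrewrite, fun ξ₂ hξ₂ hbound => hdescent.trans ?_⟩
  have hinv : 1 / ξ₂ ≤ ⟪s, y⟫ / ‖y‖ ^ 2 := by
    simpa only [one_div_div] using one_div_le_one_div_of_le (by positivity) hbound
  rw [hrewrite, neg_mul, neg_le_neg_iff, show 2 / (3 * ξ₂) = 2 / 3 * (1 / ξ₂) by ring]
  gcongr
end
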